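/- Let n ≥ 1, α > 0, μ > 0, L ≥ 0, and let f : ℝⁿ → ℝ be L-smooth. Write g(v) = (n/(2α²μ))·(f(p + μ•v) − f(p − μ•v)) • v for p ∈ ℝⁿ. Then for v and w drawn independently from the uniform probability measure σ_α on the origin-centered sphere of radius α, ∫∫ ⟨g(v), g(w)⟩ dσ_α(v) dσ_α(w) ≤ ‖∇f(p)‖² + ‖∇f(p)‖·L·n^{3/2}·α·μ + L²·n³·α²·μ²/4. -/

import Mathlib

open MeasureTheory Module

open scoped RealInnerProductSpace

/-!
The double integral is `‖∫ g dσ‖²`, so only the bias of the estimator matters. Rotation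
invariance of `σ` forces its second-moment form `(x, y) ↦ ∫ ⟪x, v⟫ ⟪y, v⟫ dσ` to be
`(α² / n) ⟪x, y⟫`: reflections make `∫ ⟪e, v⟫² dσ` the same for all unit `e`, summing over an
orthonormal basis gives `α²`, and polarization does the rest. Hence the linearised estimator
`(n / α²) ⟪∇f(p), v⟫ v` has mean exactly `∇f(p)`. The descent lemma bounds the central-difference
error by `L μ² ‖v‖²`, so `‖∫ g dσ - ∇f(p)‖ ≤ L n α μ / 2 ≤ L n^{3/2} α μ / 2`, and squaring the
triangle inequality gives the claim.
-/

theorem Continuous.integrable_of_ae_norm_eq {X F : Type*} [NormedAddCommGroup X] [ProperSpace X]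
    [MeasurableSpace X] [OpensMeasurableSpace X] [NormedAddCommGroup F] {σ : Measure X}
    [IsFiniteMeasure σ] {α : ℝ} (hσ : ∀ᵐ v ∂σ, ‖v‖ = α) {φ : X → F} (hφ : Continuous φ) :
    Integrable φ σ := by
  have hmem : ∀ᵐ v ∂σ, v ∈ Metric.sphere (0 : X) α := by simpa using hσ
  rw [← Measure.restrict_eq_self_of_ae_mem hmem]
  exact hφ.continuousOn.integrableOn_compact (isCompact_sphere 0 α)

section SphereMoments

variable {E : Type*} [NormedAddCommGroup E] [InnerProductSpace ℝ E]
  [MeasurableSpace E] [BorelSpace E] {σ : Measure E} {α : ℝ}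

theorem integral_inner_sq_map_eq {R : E ≃ₗᵢ[ℝ] E} (hR : σ.map R = σ) (x : E) :
    ∫ v, ⟪R x, v⟫ ^ 2 ∂σ = ∫ v, ⟪x, v⟫ ^ 2 ∂σ := by
  conv_lhs => rw [← hR]
  rw [integral_map R.continuous.aemeasurable (by fun_prop : Continuous _).aestronglyMeasurable]
  simp

variable (hσ : ∀ R : E ≃ₗᵢ[ℝ] E, σ.map R = σ)
include hσ

theorem integral_inner_sq_eq_of_norm_eq {x y : E} (h : ‖x‖ = ‖y‖) :
    ∫ v, ⟪x, v⟫ ^ 2 ∂σ = ∫ v, ⟪y, v⟫ ^ 2 ∂σ := by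
  rw [← Submodule.reflection_sub h]
  exact (integral_inner_sq_map_eq (hσ _) x).symm

variable [FiniteDimensional ℝ E] [IsProbabilityMeasure σ] (hσ_sphere : ∀ᵐ v ∂σ, ‖v‖ = α)
include hσ_sphere

theorem integral_inner_sq_of_norm_eq_one {e : E} (he : ‖e‖ = 1) :
    ∫ v, ⟪e, v⟫ ^ 2 ∂σ = α ^ 2 / finrank ℝ E := by
  have : Nontrivial E := ⟨e, 0, norm_ne_zero_iff.1 (by simp [he])⟩
  have hn : (0 : ℝ) < finrank ℝ E := by exact_mod_cast finrank_pos
  let b := stdOrthonormalBasis ℝ E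
  have htrace : ∑ i, ∫ v, ⟪b i, v⟫ ^ 2 ∂σ = α ^ 2 := by
    rw [← integral_finsetSum _ fun i _ ↦
        (by fun_prop : Continuous _).integrable_of_ae_norm_eq hσ_sphere,
      integral_congr_ae (hσ_sphere.mono fun v hv ↦ by rw [b.sum_sq_inner_right, hv])]
    simp
  simp_rw [integral_inner_sq_eq_of_norm_eq hσ (b.orthonormal.1 _ |>.trans he.symm),
    Finset.sum_const, Finset.card_univ, Fintype.card_fin, nsmul_eq_mul] at htrace
  field_simp
  linarith

theorem integral_inner_sq (x : E) :
    ∫ v, ⟪x, v⟫ ^ 2 ∂σ = α ^ 2 / finrank ℝ E * ‖x‖ ^ 2 := by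
  rcases eq_or_ne x 0 with rfl | hx
  · simp
  have hunit : ‖‖x‖⁻¹ • x‖ = 1 := by
    rw [norm_smul, norm_inv, norm_norm, inv_mul_cancel₀ (norm_ne_zero_iff.2 hx)]
  calc ∫ v, ⟪x, v⟫ ^ 2 ∂σ = ‖x‖ ^ 2 * ∫ v, ⟪‖x‖⁻¹ • x, v⟫ ^ 2 ∂σ := by
        rw [← integral_const_mul]
        congr with v
        rw [real_inner_smul_left]
        field_simp
    _ = α ^ 2 / finrank ℝ E * ‖x‖ ^ 2 := by
        rw [integral_inner_sq_of_norm_eq_one hσ hσ_sphere hunit, mul_comm]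

theorem integral_inner_mul_inner (x y : E) :
    ∫ v, ⟪x, v⟫ * ⟪y, v⟫ ∂σ = α ^ 2 / finrank ℝ E * ⟪x, y⟫ := by
  have hint (z : E) : Integrable (fun v ↦ ⟪z, v⟫ ^ 2) σ :=
    (by fun_prop : Continuous _).integrable_of_ae_norm_eq hσ_sphere
  have hpolar (v : E) : ⟪x, v⟫ * ⟪y, v⟫ = (⟪x + y, v⟫ ^ 2 - ⟪x, v⟫ ^ 2 - ⟪y, v⟫ ^ 2) / 2 := by
    rw [inner_add_left]
    ring
  have hint' : Integrable (fun v ↦ ⟪x + y, v⟫ ^ 2 - ⟪x, v⟫ ^ 2) σ := (hint _).sub (hint _)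
  simp_rw [hpolar]
  rw [integral_div, integral_sub hint' (hint _), integral_sub (hint _) (hint _),
    integral_inner_sq hσ hσ_sphere, integral_inner_sq hσ hσ_sphere, integral_inner_sq hσ hσ_sphere,
    norm_add_sq_real]
  ring

theorem integral_inner_smul_self (u : E) :
    ∫ v, ⟪u, v⟫ • v ∂σ = (α ^ 2 / finrank ℝ E) • u := by
  refine ext_inner_left ℝ fun y ↦ ?_
  rw [← integral_inner ((by fun_prop : Continuous _).integrable_of_ae_norm_eq hσ_sphere) y]
  simp_rw [real_inner_smul_right, mul_comm ⟪u, _⟫, integral_inner_mul_inner hσ hσ_sphere]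

end SphereMoments

theorem integral_integral_inner_eq_norm_sq {Ω E : Type*} [MeasurableSpace Ω]
    [NormedAddCommGroup E] [InnerProductSpace ℝ E] [CompleteSpace E] {σ : Measure Ω} {g : Ω → E}
    (hg : Integrable g σ) :
    ∫ v, ∫ w, ⟪g v, g w⟫ ∂σ ∂σ = ‖∫ v, g v ∂σ‖ ^ 2 := by
  simp_rw [integral_inner hg, real_inner_comm (∫ w, g w ∂σ)]
  rw [integral_inner hg, real_inner_self_eq_norm_sq]

section Smooth

variable {E : Type*} [NormedAddCommGroup E] [InnerProductSpace ℝ E] [CompleteSpace E]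
  {f : E → ℝ} {L : ℝ}

theorem abs_sub_sub_inner_gradient_le (hf : Differentiable ℝ f)
    (hL : ∀ x y, ‖gradient f x - gradient f y‖ ≤ L * ‖x - y‖) (x h : E) :
    |f (x + h) - f x - ⟪gradient f x, h⟫| ≤ L / 2 * ‖h‖ ^ 2 := by
  let φ : ℝ → ℝ := fun t ↦ f (x + t • h) - f x - t * ⟪gradient f x, h⟫
  have hφ (t : ℝ) : HasDerivAt φ ⟪gradient f (x + t • h) - gradient f x, h⟫ t := by
    have hline : HasDerivAt (fun t : ℝ ↦ x + t • h) h t := by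
      simpa using ((hasDerivAt_id t).smul_const h).const_add x
    refine ((((hf _).hasGradientAt.hasFDerivAt.comp_hasDerivAt t hline).sub_const (f x)).sub
      ((hasDerivAt_id t).mul_const ⟪gradient f x, h⟫)).congr_deriv ?_
    simp [inner_sub_left]
  have hbound (t : ℝ) (ht : t ∈ Set.Ico (0 : ℝ) 1) :
      ‖⟪gradient f (x + t • h) - gradient f x, h⟫‖ ≤ L * ‖h‖ ^ 2 * t := by
    calc ‖⟪gradient f (x + t • h) - gradient f x, h⟫‖
        ≤ ‖gradient f (x + t • h) - gradient f x‖ * ‖h‖ := norm_inner_le_norm _ _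
      _ ≤ L * ‖t • h‖ * ‖h‖ := by gcongr; simpa using hL (x + t • h) x
      _ = L * ‖h‖ ^ 2 * t := by rw [norm_smul, Real.norm_of_nonneg ht.1]; ring
  have hB (t : ℝ) : HasDerivAt (fun t ↦ L / 2 * ‖h‖ ^ 2 * t ^ 2) (L * ‖h‖ ^ 2 * t) t := by
    refine ((hasDerivAt_pow 2 t).const_mul (L / 2 * ‖h‖ ^ 2)).congr_deriv ?_
    norm_num
    ring
  simpa [φ] using image_norm_le_of_norm_deriv_right_le_deriv_boundary
    (fun t _ ↦ (hφ t).continuousAt.continuousWithinAt) (fun t _ ↦ (hφ t).hasDerivWithinAt)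
    (by simp [φ]) hB hbound (Set.right_mem_Icc.2 zero_le_one)

theorem abs_sub_sub_two_inner_gradient_le (hf : Differentiable ℝ f)
    (hL : ∀ x y, ‖gradient f x - gradient f y‖ ≤ L * ‖x - y‖) (x h : E) :
    |f (x + h) - f (x - h) - 2 * ⟪gradient f x, h⟫| ≤ L * ‖h‖ ^ 2 := by
  have hplus := abs_sub_sub_inner_gradient_le hf hL x h
  have hminus := abs_sub_sub_inner_gradient_le hf hL x (-h)
  rw [← sub_eq_add_neg, inner_neg_right, norm_neg] at hminus
  calc |f (x + h) - f (x - h) - 2 * ⟪gradient f x, h⟫|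
      = |(f (x + h) - f x - ⟪gradient f x, h⟫) - (f (x - h) - f x - -⟪gradient f x, h⟫)| := by
        congr 1
        ring
    _ ≤ L * ‖h‖ ^ 2 := (abs_sub _ _).trans (by linarith)

theorem norm_centralDifference_smul_sub_le (hf : Differentiable ℝ f)
    (hL : ∀ x y, ‖gradient f x - gradient f y‖ ≤ L * ‖x - y‖) (x v : E) {μ : ℝ} (hμ : 0 < μ) :
    ‖(1 / (2 * μ) * (f (x + μ • v) - f (x - μ • v))) • v - ⟪gradient f x, v⟫ • v‖
      ≤ L * μ / 2 * ‖v‖ ^ 3 := by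
  have hdiff := abs_sub_sub_two_inner_gradient_le hf hL x (μ • v)
  rw [real_inner_smul_right, norm_smul, Real.norm_of_nonneg hμ.le] at hdiff
  calc ‖(1 / (2 * μ) * (f (x + μ • v) - f (x - μ • v))) • v - ⟪gradient f x, v⟫ • v‖
      = ‖(1 / (2 * μ) * (f (x + μ • v) - f (x - μ • v) - 2 * (μ * ⟪gradient f x, v⟫))) • v‖ := by
        rw [← sub_smul]
        congr 2
        field_simp
    _ = 1 / (2 * μ) * |f (x + μ • v) - f (x - μ • v) - 2 * (μ * ⟪gradient f x, v⟫)| * ‖v‖ := by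
        rw [norm_smul, Real.norm_eq_abs, abs_mul, abs_of_pos (by positivity : 0 < 1 / (2 * μ))]
    _ ≤ 1 / (2 * μ) * (L * (μ * ‖v‖) ^ 2) * ‖v‖ := by gcongr
    _ = L * μ / 2 * ‖v‖ ^ 3 := by field_simp

end Smooth

theorem norm_integral_centralDifference_smul_sub_gradient_le {E : Type*} [NormedAddCommGroup E]
    [InnerProductSpace ℝ E] [FiniteDimensional ℝ E] [MeasurableSpace E] [BorelSpace E]
    {σ : Measure E} [IsProbabilityMeasure σ] {α μ L : ℝ} (hα : 0 < α) (hμ : 0 < μ)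
    (hσ_sphere : ∀ᵐ v ∂σ, ‖v‖ = α) (hσ_rot : ∀ R : E ≃ₗᵢ[ℝ] E, σ.map R = σ) {f : E → ℝ}
    (hf : Differentiable ℝ f) (hL : ∀ x y, ‖gradient f x - gradient f y‖ ≤ L * ‖x - y‖) (p : E) :
    ‖∫ v, ((finrank ℝ E : ℝ) / (2 * α ^ 2 * μ) * (f (p + μ • v) - f (p - μ • v))) • v ∂σ
        - gradient f p‖ ≤ L * finrank ℝ E * α * μ / 2 := by
  set n : ℝ := (finrank ℝ E : ℝ)
  have hn : 0 < n := by
    obtain ⟨v, hv⟩ := hσ_sphere.exists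
    have : Nontrivial E := ⟨v, 0, norm_ne_zero_iff.1 (by rw [hv]; exact hα.ne')⟩
    exact Nat.cast_pos.2 finrank_pos
  have hf_cont := hf.continuous
  have hmean : ∫ v, (n / α ^ 2) • (⟪gradient f p, v⟫ • v) ∂σ = gradient f p := by
    rw [integral_smul, integral_inner_smul_self hσ_rot hσ_sphere, smul_smul, div_mul_div_comm,
      mul_comm n, div_self (by positivity), one_smul]
  rw [← hmean, ← integral_sub ((by fun_prop : Continuous _).integrable_of_ae_norm_eq hσ_sphere)
    ((by fun_prop : Continuous _).integrable_of_ae_norm_eq hσ_sphere)]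
  refine (norm_integral_le_of_norm_le_const (C := L * n * α * μ / 2)
    (hσ_sphere.mono fun v hv ↦ ?_)).trans (by simp)
  have hsplit : n / (2 * α ^ 2 * μ) * (f (p + μ • v) - f (p - μ • v))
      = n / α ^ 2 * (1 / (2 * μ) * (f (p + μ • v) - f (p - μ • v))) := by
    field_simp
  rw [hsplit, ← smul_smul, ← smul_sub, norm_smul, Real.norm_of_nonneg (by positivity)]
  calc n / α ^ 2 * ‖_‖ ≤ n / α ^ 2 * (L * μ / 2 * ‖v‖ ^ 3) := by
        gcongr
        exact norm_centralDifference_smul_sub_le hf hL p v hμ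
    _ = L * n * α * μ / 2 := by rw [hv]; field_simp

/-- For an `L`-smooth `f : ℝⁿ → ℝ` and the two-point zeroth-order gradient
estimator `g(v) = (n/(2α²μ))·(f(p+μv) − f(p−μv)) • v`, the cross term for two independent
samples `v, w ∼ σ` satisfies
`∫∫ ⟨g(v), g(w)⟩ dσ(v) dσ(w) ≤ ‖∇f(p)‖² + ‖∇f(p)‖·L·n^{3/2}·α·μ + L²n³α²μ²/4`. -/
theorem gw_estimator_cross_term
    (n : ℕ) (hn : 1 ≤ n) (α μ L : ℝ) (hα : 0 < α) (hμ : 0 < μ) (hL : 0 ≤ L)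
    (σ : Measure (EuclideanSpace ℝ (Fin n))) [IsProbabilityMeasure σ]
    (hσ_sphere : ∀ᵐ v ∂σ, ‖v‖ = α)
    (hσ_rot : ∀ R : EuclideanSpace ℝ (Fin n) ≃ₗᵢ[ℝ] EuclideanSpace ℝ (Fin n),
      Measure.map R σ = σ)
    (f : EuclideanSpace ℝ (Fin n) → ℝ)
    (hf_diff : Differentiable ℝ f)
    (hf_smooth : ∀ x y, ‖gradient f x - gradient f y‖ ≤ L * ‖x - y‖)
    (p : EuclideanSpace ℝ (Fin n))
    (g : EuclideanSpace ℝ (Fin n) → EuclideanSpace ℝ (Fin n))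
    (hg : ∀ v, g v = ((n : ℝ) / (2 * α ^ 2 * μ) * (f (p + μ • v) - f (p - μ • v))) • v) :
    ∫ v, ∫ w, (inner ℝ (g v) (g w) : ℝ) ∂σ ∂σ
      ≤ ‖gradient f p‖ ^ 2 + ‖gradient f p‖ * L * (n : ℝ) ^ ((3 : ℝ) / 2) * α * μ
          + L ^ 2 * (n : ℝ) ^ 3 * α ^ 2 * μ ^ 2 / 4 := by
  obtain rfl : g = _ := funext hg
  have hbias := norm_integral_centralDifference_smul_sub_gradient_le hα hμ hσ_sphere hσ_rot
    hf_diff hf_smooth p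
  rw [finrank_euclideanSpace_fin] at hbias
  have hf_cont := hf_diff.continuous
  rw [integral_integral_inner_eq_norm_sq
    ((by fun_prop : Continuous _).integrable_of_ae_norm_eq hσ_sphere)]
  set N := (n : ℝ) ^ ((3 : ℝ) / 2)
  have hn_le : (n : ℝ) ≤ N := Real.self_le_rpow_of_one_le (by exact_mod_cast hn) (by norm_num)
  have hN_sq : N ^ 2 = (n : ℝ) ^ 3 := by
    rw [← Real.rpow_natCast, ← Real.rpow_mul (Nat.cast_nonneg n)]
    norm_num
  have hmean_le := (norm_le_norm_add_norm_sub' _ (gradient f p)).trans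
    (add_le_add_right (hbias.trans (by gcongr : L * n * α * μ / 2 ≤ L * N * α * μ / 2)) _)
  calc _ ≤ (‖gradient f p‖ + L * N * α * μ / 2) ^ 2 := by gcongr
    _ = _ := by linear_combination (L * α * μ / 2) ^ 2 * hN_sq
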